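/- Let M be a finite matroid with ground set E, and let C be a non-spanning circuit of M that is freely placed and coindependent. Suppose that the deletion M \ C has exactly two non-spanning circuits C₁ and C₂, and that C₁ and C₂ partition E \ C. Then the non-spanning circuits of M are exactly C₁, C₂ and C. -/

import Mathlib

open Set

namespace Matroid

variable {α β : Type*}

/-- A circuit of a matroid is a minimal dependent set. -/
def Circuit (M : Matroid α) (C : Set α) : Prop :=
  M.Dep C ∧ ∀ ⦃D : Set α⦄, M.Dep D → D ⊆ C → D = C

/-- The rank of a set `X` in a matroid `M` : the maximum cardinality of an
independent subset of `X`. -/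
noncomputable def rkOn (M : Matroid α) (X : Set α) : ℕ :=
  sSup {n | ∃ I, M.Indep I ∧ I ⊆ X ∧ I.ncard = n}

/-- The rank of a matroid : the rank of its ground set. -/
noncomputable def rank (M : Matroid α) : ℕ := M.rkOn M.E

/-- A hyperplane : a flat whose rank is one less than the rank of the matroid. -/
def Hyperplane (M : Matroid α) (H : Set α) : Prop :=
  M.IsFlat H ∧ M.rkOn H + 1 = M.rank

/-- Deletion of the set `D` from the matroid `M`. -/
def delete' (M : Matroid α) (D : Set α) : Matroid α := M.restrict (M.E \ D)

/-- Contraction of the set `C` in the matroid `M`. -/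
def contract' (M : Matroid α) (C : Set α) : Matroid α := ((M✶).delete' C)✶

/-- A circuit `C` of `M` is freely placed if every circuit `C'` of `M` with `C' ≠ C`
and `C' ∩ C ≠ ∅` is spanning. -/
def FreelyPlaced (M : Matroid α) (C : Set α) : Prop :=
  ∀ ⦃C' : Set α⦄, M.Circuit C' → C' ≠ C → (C' ∩ C).Nonempty → M.Spanning C'

/-- A coloop is an element belonging to every base. -/
def Coloop (M : Matroid α) (e : α) : Prop := ∀ ⦃B : Set α⦄, M.IsBase B → e ∈ B

/-- An element `e` is free in `M` if it is not a coloop and every circuit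
containing `e` is spanning. -/
def FreeElem (M : Matroid α) (e : α) : Prop :=
  e ∈ M.E ∧ ¬ M.Coloop e ∧ ∀ ⦃C : Set α⦄, M.Circuit C → e ∈ C → M.Spanning C

/-- A loop is an element `e` such that `{e}` is a circuit. -/
def IsLoop' (M : Matroid α) (e : α) : Prop := M.Circuit {e}

/-- Two non-loop elements of the ground set are parallel if they are equal or
form a two-element circuit. -/
def Parallel (M : Matroid α) (e f : α) : Prop :=
  e ∈ M.E ∧ f ∈ M.E ∧ ¬ M.IsLoop' e ∧ ¬ M.IsLoop' f ∧ (e = f ∨ M.Circuit {e, f})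

/-- Two matroids are isomorphic if there is a bijection between their ground sets
mapping independent sets to independent sets. -/
def IsIso (M : Matroid α) (N : Matroid β) : Prop :=
  ∃ e : M.E ≃ N.E, ∀ I : Set M.E,
    M.Indep (Subtype.val '' I) ↔ N.Indep (Subtype.val '' (e '' I))

/-!
As `C` is coindependent, `E \ C` is spanning, so a subset of `E \ C` is a non-spanning circuit
of `M` exactly when it is one of `M \ C`. Free placement makes every non-spanning circuit of `M`
other than `C` avoid `C`, hence lie in `E \ C`.
-/

variable {M : Matroid α} {C D R X : Set α}

lemma circuit_iff_isCircuit : M.Circuit C ↔ M.IsCircuit C :=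
  isCircuit_iff.symm

lemma restrict_spanning_iff_of_spanning (hR : M.Spanning R) (hXR : X ⊆ R) :
    (M ↾ R).Spanning X ↔ M.Spanning X := by
  have hXE : X ⊆ M.E := hXR.trans hR.subset_ground
  rw [restrict_spanning_iff hXR hR.subset_ground, spanning_iff_closure_eq hXE]
  refine ⟨fun hRX ↦ ?_, fun hX ↦ hX ▸ hR.subset_ground⟩
  exact (M.closure_subset_ground X).antisymm
    (hR.closure_eq ▸ closure_subset_closure_of_subset_closure hRX)

lemma restrict_isCircuit_and_not_spanning_iff (hR : M.Spanning R) (hXR : X ⊆ R) :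
    (M ↾ R).IsCircuit X ∧ ¬ (M ↾ R).Spanning X ↔ M.IsCircuit X ∧ ¬ M.Spanning X := by
  rw [restrict_isCircuit_iff hR.subset_ground, restrict_spanning_iff_of_spanning hR hXR,
    and_iff_left hXR]

lemma Coindep.delete'_circuit_and_not_spanning_iff (hC : M.Coindep C) (hX : X ⊆ M.E \ C) :
    (M.delete' C).Circuit X ∧ ¬ (M.delete' C).Spanning X ↔ M.Circuit X ∧ ¬ M.Spanning X := by
  simp only [delete', circuit_iff_isCircuit]
  exact restrict_isCircuit_and_not_spanning_iff hC.compl_spanning hX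

lemma FreelyPlaced.disjoint_of_circuit_of_not_spanning (hfp : M.FreelyPlaced C)
    (hD : M.Circuit D) (hDC : D ≠ C) (hDns : ¬ M.Spanning D) : Disjoint D C :=
  disjoint_iff_inter_eq_empty.2 <| not_nonempty_iff_eq_empty.1 fun h ↦ hDns (hfp hD hDC h)

theorem nonspanning_circuits_eq_general (M : Matroid α) (C C₁ C₂ : Set α)
    (hC : M.Circuit C) (hCns : ¬ M.Spanning C)
    (hfp : M.FreelyPlaced C) (hco : M.Coindep C)
    (h1 : (M.delete' C).Circuit C₁ ∧ ¬ (M.delete' C).Spanning C₁)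
    (h2 : (M.delete' C).Circuit C₂ ∧ ¬ (M.delete' C).Spanning C₂)
    (honly : ∀ D : Set α, (M.delete' C).Circuit D → ¬ (M.delete' C).Spanning D →
      D = C₁ ∨ D = C₂) :
    ∀ D : Set α, (M.Circuit D ∧ ¬ M.Spanning D) ↔ (D = C₁ ∨ D = C₂ ∨ D = C) := by
  intro D
  constructor
  · rintro ⟨hD, hDns⟩
    obtain rfl | hDC := eq_or_ne D C
    · exact .inr (.inr rfl)
    have hDsub : D ⊆ M.E \ C := subset_sdiff.2
      ⟨hD.1.subset_ground, hfp.disjoint_of_circuit_of_not_spanning hD hDC hDns⟩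
    obtain ⟨hD', hDns'⟩ := (hco.delete'_circuit_and_not_spanning_iff hDsub).2 ⟨hD, hDns⟩
    obtain h | h := honly D hD' hDns'
    exacts [.inl h, .inr (.inl h)]
  · rintro (rfl | rfl | rfl)
    · exact (hco.delete'_circuit_and_not_spanning_iff h1.1.1.subset_ground).1 h1
    · exact (hco.delete'_circuit_and_not_spanning_iff h2.1.1.subset_ground).1 h2
    · exact ⟨hC, hCns⟩

/-- If `C` is a freely placed coindependent non-spanning circuit of a finite matroid `M`
and `M \ C` has exactly two non-spanning circuits `C₁` and `C₂` which partition
`E \ C`, then the non-spanning circuits of `M` are exactly `C₁`, `C₂` and `C`. -/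
theorem nonspanning_circuits_eq (M : Matroid α) [M.Finite] (C C₁ C₂ : Set α)
    (hC : M.Circuit C) (hCns : ¬ M.Spanning C)
    (hfp : M.FreelyPlaced C) (hco : M.Coindep C)
    (hne : C₁ ≠ C₂)
    (h1 : (M.delete' C).Circuit C₁ ∧ ¬ (M.delete' C).Spanning C₁)
    (h2 : (M.delete' C).Circuit C₂ ∧ ¬ (M.delete' C).Spanning C₂)
    (honly : ∀ D : Set α, (M.delete' C).Circuit D → ¬ (M.delete' C).Spanning D →
      D = C₁ ∨ D = C₂)
    (hdisj : Disjoint C₁ C₂) (hpart : C₁ ∪ C₂ = M.E \ C) :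
    ∀ D : Set α, (M.Circuit D ∧ ¬ M.Spanning D) ↔ (D = C₁ ∨ D = C₂ ∨ D = C) :=
  nonspanning_circuits_eq_general M C C₁ C₂ hC hCns hfp hco h1 h2 honly

end Matroid
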